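/- arXiv:2503.20324 — 2 statements merged into one kernel-verified Lean document; each statement's English description precedes it below -/
import Mathlib

section
/- The second-best joint task sequence differs from the best joint task sequence in exactly one agent's component, namely some agent l uses its second-best individual sequence while all others use their best individual sequence (assuming per-agent costs within each Sᵢ are pairwise distinct and at least two sequences exist per agent). -/
private lemma sum_split {N : ℕ} (S : Fin N → Type*) [∀ i, Fintype (S i)]
    (cost : ∀ i, S i → ℝ) (T : ∀ i, S i) (j : Fin N) :
    ∑ i, cost i (T i) = cost j (T j) + ∑ i ∈ Finset.univ.erase j, cost i (T i) :=
  (Finset.add_sum_erase _ _ (Finset.mem_univ j)).symm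

/-- The second-best joint task sequence differs from the best joint task
sequence in exactly one agent's component, namely some agent `l` uses its second-best
individual sequence while all others use their best individual sequence. -/
theorem stmt_2 {N : ℕ} (S : Fin N → Type*) [∀ i, Fintype (S i)] [∀ i, Nonempty (S i)]
    (hcard : ∀ i, 2 ≤ Fintype.card (S i))
    (cost : ∀ i, S i → ℝ) (hinj : ∀ i, Function.Injective (cost i))
    (T1 T2 : ∀ i, S i)
    (hbest : ∀ T : ∀ i, S i, ∑ i, cost i (T1 i) ≤ ∑ i, cost i (T i))
    (hne : T2 ≠ T1)
    (hsecond : ∀ T : ∀ i, S i, T ≠ T1 → ∑ i, cost i (T2 i) ≤ ∑ i, cost i (T i)) :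
    ∃ l : Fin N, (∀ i, i ≠ l → T2 i = T1 i) ∧ T2 l ≠ T1 l ∧
      (∀ s : S l, s ≠ T1 l → cost l (T2 l) ≤ cost l s) := by
  -- per-coordinate minimality of T1
  have hmin : ∀ (j : Fin N) (s : S j), cost j (T1 j) ≤ cost j s := by
    intro j s
    have h := hbest (Function.update T1 j s)
    rw [sum_split S cost T1 j, sum_split S cost (Function.update T1 j s) j,
      Function.update_self] at h
    have hrest : ∑ i ∈ Finset.univ.erase j, cost i (Function.update T1 j s i)
        = ∑ i ∈ Finset.univ.erase j, cost i (T1 i) := by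
      refine Finset.sum_congr rfl fun i hi => ?_
      rw [Function.update_of_ne (Finset.ne_of_mem_erase hi)]
    rw [hrest] at h
    linarith
  obtain ⟨l, hl⟩ := Function.ne_iff.mp hne
  refine ⟨l, ?_, hl, ?_⟩
  · intro i hi
    by_contra hi2
    -- replace l-component of T2 with T1 l: still ≠ T1 (differs at i)
    set T' := Function.update T2 l (T1 l) with hT'
    have hT'ne : T' ≠ T1 := by
      intro h
      apply hi2
      have := congrFun h i
      rwa [hT', Function.update_of_ne hi] at this
    have h := hsecond T' hT'ne
    rw [sum_split S cost T2 l, sum_split S cost T' l, hT', Function.update_self] at h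
    have hrest : ∑ i ∈ Finset.univ.erase l, cost i (Function.update T2 l (T1 l) i)
        = ∑ i ∈ Finset.univ.erase l, cost i (T2 i) := by
      refine Finset.sum_congr rfl fun i hi => ?_
      rw [Function.update_of_ne (Finset.ne_of_mem_erase hi)]
    rw [hrest] at h
    have h2 : cost l (T2 l) ≤ cost l (T1 l) := by linarith
    exact hl (hinj l (le_antisymm h2 (hmin l (T2 l))))
  · intro s hs
    have hagree : ∀ i, i ≠ l → T2 i = T1 i := by
      intro i hi
      by_contra hi2
      set T' := Function.update T2 l (T1 l) with hT'
      have hT'ne : T' ≠ T1 := by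
        intro h
        apply hi2
        have := congrFun h i
        rwa [hT', Function.update_of_ne hi] at this
      have h := hsecond T' hT'ne
      rw [sum_split S cost T2 l, sum_split S cost T' l, hT', Function.update_self] at h
      have hrest : ∑ i ∈ Finset.univ.erase l, cost i (Function.update T2 l (T1 l) i)
          = ∑ i ∈ Finset.univ.erase l, cost i (T2 i) := by
        refine Finset.sum_congr rfl fun i hi => ?_
        rw [Function.update_of_ne (Finset.ne_of_mem_erase hi)]
      rw [hrest] at h
      have h2 : cost l (T2 l) ≤ cost l (T1 l) := by linarith
      exact hl (hinj l (le_antisymm h2 (hmin l (T2 l))))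
    -- compare T2 with T1 updated at l to s
    set T' := Function.update T1 l s with hT'
    have hT'ne : T' ≠ T1 := by
      intro h
      apply hs
      have := congrFun h l
      rwa [hT', Function.update_self] at this
    have h := hsecond T' hT'ne
    rw [sum_split S cost T2 l, sum_split S cost T' l, hT', Function.update_self] at h
    have hrest : ∑ i ∈ Finset.univ.erase l, cost i (Function.update T1 l s i)
        = ∑ i ∈ Finset.univ.erase l, cost i (T2 i) := by
      refine Finset.sum_congr rfl fun i hi => ?_
      rw [Function.update_of_ne (Finset.ne_of_mem_erase hi),
        hagree i (Finset.ne_of_mem_erase hi)]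
    rw [hrest] at h
    linarith
end

section
/- If ω = ∞ so that only the single best joint task sequence's tree is searched, then the algorithm may fail to find an existing solution: there exists an abstract instance with two trees where tree 1 (lower root bound) contains no feasible node but tree 2 does; hence restricting search to tree 1 is incomplete. -/
/-- incompleteness of the sequential, ω = ∞ method: there exists an
abstract instance with two trees where tree 0 has the lower root bound `L 0 ≤ L 1`
and all node costs are at least their tree's bound, tree 0 contains no feasible node
while tree 1 contains one; hence any search restricted to tree 0 never returns a
solution although a solution exists. -/
theorem stmt_14 :
    ∃ (Node : Type) (tree : Node → Fin 2) (cost : Node → ℝ)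
      (feasible : Node → Prop) (L : Fin 2 → ℝ),
      L 0 ≤ L 1 ∧
      (∀ n : Node, L (tree n) ≤ cost n) ∧
      (∀ n : Node, tree n = 0 → ¬ feasible n) ∧
      (∃ n : Node, tree n = 1 ∧ feasible n) ∧
      (∀ pop : ℕ → Node, (∀ k, tree (pop k) = 0) → ∀ k, ¬ feasible (pop k)) := by
  refine ⟨Fin 2, id, fun _ => 1, fun n => n = 1, fun _ => 0, le_refl _, fun n => zero_le_one,
    fun n h => by simp_all, ⟨1, rfl, rfl⟩, fun pop h k hf => by
      have := h k; rw [hf] at this; exact one_ne_zero this⟩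
end
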